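/- For every n: if there exists a C_4-free graph on n vertices that arrows (3,3)^v, then there exists a W_5-free graph on n+1 vertices that arrows (3,3)^e (namely the cone over the witness). Consequently F_e(3,3;W_5) ≤ F_v(3,3;C_4) + 1. -/
import Mathlib


/-- `G → (3,3)ᵛ`: every 2-coloring of the vertices of `G` contains three pairwise
adjacent vertices of the same color. -/
def VertexArrows33 {V : Type*} (G : SimpleGraph V) : Prop :=
  ∀ c : V → Bool, ∃ x y z : V,
    G.Adj x y ∧ G.Adj x z ∧ G.Adj y z ∧ c x = c y ∧ c y = c z

/-- `G → (3,3)ᵉ`: every 2-coloring of the edges of `G` contains three pairwise adjacent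
vertices whose three connecting edges all have the same color. -/
def EdgeArrows33 {V : Type*} (G : SimpleGraph V) : Prop :=
  ∀ c : Sym2 V → Bool, ∃ x y z : V,
    G.Adj x y ∧ G.Adj x z ∧ G.Adj y z ∧
    c s(x, y) = c s(x, z) ∧ c s(x, z) = c s(y, z)

/-- `G` is `H`-free: `G` contains no (not necessarily induced) subgraph isomorphic to `H`,
i.e. there is no injective graph homomorphism from `H` to `G`. -/
def HFree {W V : Type*} (H : SimpleGraph W) (G : SimpleGraph V) : Prop :=
  ¬ ∃ f : H →g G, Function.Injective f

/-- `C₄`, the cycle on four vertices: edges `{i, i+1}` in `Fin 4`. -/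
def C4 : SimpleGraph (Fin 4) :=
  SimpleGraph.fromRel (fun i j => j = i + 1)

/-- `W₅`, the wheel on five vertices: the hub `0` is adjacent to `1,2,3,4`,
which form the 4-cycle `1-2-3-4-1`. -/
def W5 : SimpleGraph (Fin 5) :=
  SimpleGraph.fromRel (fun i j =>
    i = 0 ∨ (i = 1 ∧ j = 2) ∨ (i = 2 ∧ j = 3) ∨ (i = 3 ∧ j = 4) ∨ (i = 4 ∧ j = 1))

instance : DecidableRel C4.Adj := fun a b =>
  decidable_of_iff _ (SimpleGraph.fromRel_adj _ a b).symm

instance : DecidableRel W5.Adj := fun a b =>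
  decidable_of_iff _ (SimpleGraph.fromRel_adj _ a b).symm

/-- For each vertex `i` of `W5`, an injective copy of `C4` inside `W5` avoiding `i`. -/
def tbl : Fin 5 → Fin 4 → Fin 5 :=
  ![![1,2,3,4], ![0,2,3,4], ![0,3,4,1], ![0,4,1,2], ![0,1,2,3]]

lemma tbl_hom : ∀ (i : Fin 5) (a b : Fin 4), C4.Adj a b → W5.Adj (tbl i a) (tbl i b) := by
  decide

lemma tbl_inj : ∀ (i : Fin 5), Function.Injective (tbl i) := by decide

lemma tbl_ne : ∀ (i : Fin 5) (k : Fin 4), tbl i k ≠ i := by decide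

/-- The cone over `G`, with apex `Fin.last n`. -/
def cone {n : ℕ} (G : SimpleGraph (Fin n)) : SimpleGraph (Fin (n + 1)) :=
  SimpleGraph.fromRel (fun a b =>
    a = Fin.last n ∨ ∃ x y : Fin n, a = x.castSucc ∧ b = y.castSucc ∧ G.Adj x y)

lemma cone_adj_last {n : ℕ} (G : SimpleGraph (Fin n)) (x : Fin n) :
    (cone G).Adj (Fin.last n) x.castSucc := by
  refine ⟨(x.castSucc_lt_last).ne', Or.inl (Or.inl rfl)⟩

lemma cone_adj_of_adj {n : ℕ} (G : SimpleGraph (Fin n)) {x y : Fin n} (h : G.Adj x y) :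
    (cone G).Adj x.castSucc y.castSucc :=
  ⟨fun e => h.ne (Fin.castSucc_injective n e),
    Or.inl (Or.inr ⟨x, y, rfl, rfl, h⟩)⟩

lemma adj_of_cone_adj {n : ℕ} (G : SimpleGraph (Fin n)) {x y : Fin n}
    (h : (cone G).Adj x.castSucc y.castSucc) : G.Adj x y := by
  rcases h with ⟨hne, h | h⟩
  · rcases h with h | ⟨a, b, ha, hb, hab⟩
    · exact absurd h x.castSucc_lt_last.ne
    · rw [Fin.castSucc_injective n ha, Fin.castSucc_injective n hb]; exact hab
  · rcases h with h | ⟨a, b, ha, hb, hab⟩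
    · exact absurd h y.castSucc_lt_last.ne
    · rw [Fin.castSucc_injective n ha, Fin.castSucc_injective n hb]; exact hab.symm

lemma cone_W5_free {n : ℕ} (G : SimpleGraph (Fin n)) (hF : HFree C4 G) :
    HFree W5 (cone G) := by
  rintro ⟨f, hf⟩
  -- pick i such that f avoids Fin.last n on tbl i
  have key : ∃ i : Fin 5, ∀ k : Fin 4, f (tbl i k) ≠ Fin.last n := by
    by_cases h0 : ∃ i, f i = Fin.last n
    · obtain ⟨i, hi⟩ := h0
      exact ⟨i, fun k he => tbl_ne i k (hf (he.trans hi.symm))⟩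
    · push_neg at h0
      exact ⟨0, fun k => h0 _⟩
  obtain ⟨i, hi⟩ := key
  have hlt : ∀ k : Fin 4, f (tbl i k) < Fin.last n :=
    fun k => lt_of_le_of_ne (Fin.le_last _) (hi k)
  set p : Fin 4 → Fin n := fun k => (f (tbl i k)).castPred (hi k) with hp
  have hcast : ∀ k, (p k).castSucc = f (tbl i k) := fun k => Fin.castSucc_castPred _ _
  refine hF ⟨⟨p, fun {a b} hab => ?_⟩, fun a b hab => ?_⟩
  · apply adj_of_cone_adj G
    rw [hcast, hcast]
    exact f.map_adj (tbl_hom i a b hab)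
  · have hab' : p a = p b := hab
    have : f (tbl i a) = f (tbl i b) := by
      rw [← hcast, ← hcast, hab']
    exact tbl_inj i (hf this)

lemma cone_edge_arrows {n : ℕ} (G : SimpleGraph (Fin n)) (hA : VertexArrows33 G) :
    EdgeArrows33 (cone G) := by
  intro c
  set L := Fin.last n
  obtain ⟨x, y, z, hxy, hxz, hyz, h1, h2⟩ :=
    hA (fun v => c s(L, v.castSucc))
  set a := x.castSucc
  set b := y.castSucc
  set e := z.castSucc
  -- spoke colors are all equal to col
  set col := c s(L, a) with hcol
  have hb : c s(L, b) = col := h1.symm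
  have he : c s(L, e) = col := (h1.trans h2).symm
  by_cases hab : c s(a, b) = col
  · exact ⟨L, a, b, cone_adj_last G x, cone_adj_last G y, cone_adj_of_adj G hxy,
      hb.symm, hb.trans hab.symm⟩
  by_cases hae : c s(a, e) = col
  · exact ⟨L, a, e, cone_adj_last G x, cone_adj_last G z, cone_adj_of_adj G hxz,
      he.symm, he.trans hae.symm⟩
  by_cases hbe : c s(b, e) = col
  · exact ⟨L, b, e, cone_adj_last G y, cone_adj_last G z, cone_adj_of_adj G hyz,
      hb.trans he.symm, he.trans hbe.symm⟩
  · have h1' : c s(a, b) = !col := Bool.eq_not_iff.mpr hab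
    have h2' : c s(a, e) = !col := Bool.eq_not_iff.mpr hae
    have h3' : c s(b, e) = !col := Bool.eq_not_iff.mpr hbe
    exact ⟨a, b, e, cone_adj_of_adj G hxy, cone_adj_of_adj G hxz, cone_adj_of_adj G hyz,
      h1'.trans h2'.symm, h2'.trans h3'.symm⟩


/-- `F_v(3,3;C₄)` as an element of `ℕ∞`: the least order of a `C₄`-free graph
arrowing `(3,3)ᵛ`. -/
noncomputable def folkmanV33C4 : ℕ∞ :=
  sInf {n : ℕ∞ | ∃ m : ℕ, (m : ℕ∞) = n ∧
    ∃ G : SimpleGraph (Fin m), HFree C4 G ∧ VertexArrows33 G}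

/-- `F_e(3,3;W₅)` as an element of `ℕ∞`: the least order of a `W₅`-free graph
arrowing `(3,3)ᵉ`. -/
noncomputable def folkmanE33W5 : ℕ∞ :=
  sInf {n : ℕ∞ | ∃ m : ℕ, (m : ℕ∞) = n ∧
    ∃ G : SimpleGraph (Fin m), HFree W5 G ∧ EdgeArrows33 G}

theorem stmt_6 :
    (∀ n : ℕ, (∃ G : SimpleGraph (Fin n), HFree C4 G ∧ VertexArrows33 G) →
      ∃ G' : SimpleGraph (Fin (n + 1)), HFree W5 G' ∧ EdgeArrows33 G') ∧
    folkmanE33W5 ≤ folkmanV33C4 + 1 := by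
  have main : ∀ n : ℕ, (∃ G : SimpleGraph (Fin n), HFree C4 G ∧ VertexArrows33 G) →
      ∃ G' : SimpleGraph (Fin (n + 1)), HFree W5 G' ∧ EdgeArrows33 G' := by
    rintro n ⟨G, hF, hA⟩
    exact ⟨cone G, cone_W5_free G hF, cone_edge_arrows G hA⟩
  refine ⟨main, ?_⟩
  set SV := {n : ℕ∞ | ∃ m : ℕ, (m : ℕ∞) = n ∧
    ∃ G : SimpleGraph (Fin m), HFree C4 G ∧ VertexArrows33 G} with hSV
  by_cases hne : SV.Nonempty
  · have hmem := csInf_mem hne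
    obtain ⟨m, hm, G, hF, hA⟩ := hmem
    have : ((m + 1 : ℕ) : ℕ∞) ∈ {n : ℕ∞ | ∃ m : ℕ, (m : ℕ∞) = n ∧
        ∃ G : SimpleGraph (Fin m), HFree W5 G ∧ EdgeArrows33 G} :=
      ⟨m + 1, rfl, by
        obtain ⟨G', h1, h2⟩ := main m ⟨G, hF, hA⟩
        exact ⟨G', h1, h2⟩⟩
    calc folkmanE33W5 ≤ ((m + 1 : ℕ) : ℕ∞) := sInf_le this
      _ = folkmanV33C4 + 1 := by
        rw [folkmanV33C4, ← hSV, ← hm]; push_cast; ring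
  · have : SV = ∅ := Set.not_nonempty_iff_eq_empty.mp hne
    rw [folkmanV33C4, ← hSV, this, sInf_empty]
    simp
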